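/- arXiv:1805.06992 — 4 statements merged into one kernel-verified Lean document; each statement's English description precedes it below -/
import Mathlib

section
/- Let G=(V,E) be a finite acyclic digraph, let T be a set of additional directed edges on V disjoint from E, and let H=(V, E∪T). If C=(V, E∪T') with T'⊆T is a maximal child of (G,T), then (i) T' contains every edge of T whose two endpoints lie in distinct strongly connected components of H, and (ii) for every strongly connected component S of H, the restriction (S, (E∪T') ∩ (S×S)) is a maximal child of the pair consisting of the restricted graph (S, E ∩ (S×S)) and the restricted edge set T ∩ (S×S). -/
/-- `u` reaches `v`: there is a nonempty directed path from `u` to `v` using edges in `E`. -/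
def reaches {V : Type*} (E : Set (V × V)) (u v : V) : Prop :=
  Relation.TransGen (fun a b => (a, b) ∈ E) u v

/-- A digraph (with edge set `E`) is acyclic if no vertex reaches itself. -/
def Acyclic {V : Type*} (E : Set (V × V)) : Prop := ∀ v, ¬ reaches E v v

/-- A digraph contains a directed cycle if some vertex reaches itself. -/
def HasCycle {V : Type*} (E : Set (V × V)) : Prop := ∃ v, reaches E v v

/-- `(V, E ∪ T')` is a maximal child of `((V,E), T)`. -/
def IsMaxChild {V : Type*} (E T T' : Set (V × V)) : Prop :=
  T' ⊆ T ∧ Acyclic (E ∪ T') ∧ ∀ e ∈ T \ T', HasCycle (insert e (E ∪ T'))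

/-- `u` and `v` lie in the same strongly connected component of the digraph `H`. -/
def sameSCC {V : Type*} (H : Set (V × V)) (u v : V) : Prop :=
  u = v ∨ (reaches H u v ∧ reaches H v u)

/-- `S` is a strongly connected component of the digraph `H`. -/
def IsSCC {V : Type*} (H : Set (V × V)) (S : Set V) : Prop :=
  ∃ u, S = {v | sameSCC H u v}

/-!
Maximality forces every missing edge `(a, b) ∈ T \ T'` to close a cycle, i.e. `E ∪ T'` already
contains a path from `b` back to `a`. That path together with the edge puts `a` and `b` in one
strongly connected component of `H`, which gives (i); and every vertex on the path lies in that
component too, so the path survives restriction to it, which gives maximality in (ii).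
-/

open Relation

section Reachability

variable {V : Type*}

lemma reaches_mono {A B : Set (V × V)} (h : A ⊆ B) {u v : V} (huv : reaches A u v) :
    reaches B u v :=
  TransGen.mono (fun _ _ hab => h hab) _ _ huv

lemma Acyclic.mono {A B : Set (V × V)} (hB : Acyclic B) (h : A ⊆ B) : Acyclic A :=
  fun v hv => hB v (reaches_mono h hv)

lemma reaches_insert {F : Set (V × V)} {x y u v : V} (h : reaches (insert (x, y) F) u v) :
    reaches F u v ∨
      (ReflTransGen (fun a b => (a, b) ∈ F) u x ∧ ReflTransGen (fun a b => (a, b) ∈ F) y v) := by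
  induction h with
  | single huv =>
    rcases huv with huv | huv
    · obtain ⟨rfl, rfl⟩ := Prod.mk.inj huv
      exact Or.inr ⟨.refl, .refl⟩
    · exact Or.inl (.single huv)
  | tail _ hbc ih =>
    rcases hbc with hbc | hbc
    · obtain ⟨rfl, rfl⟩ := Prod.mk.inj hbc
      exact Or.inr ⟨ih.elim TransGen.to_reflTransGen And.left, .refl⟩
    · exact ih.imp (·.tail hbc) fun ⟨hux, hyv⟩ => ⟨hux, hyv.tail hbc⟩

lemma hasCycle_insert_of_reaches {F : Set (V × V)} {x y : V} (h : reaches F y x) :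
    HasCycle (insert (x, y) F) :=
  ⟨x, .head (Set.mem_insert _ _) (reaches_mono (Set.subset_insert _ _) h)⟩

lemma Acyclic.reaches_of_hasCycle_insert {F : Set (V × V)} (hF : Acyclic F) {x y : V}
    (hxy : x ≠ y) (h : HasCycle (insert (x, y) F)) : reaches F y x := by
  obtain ⟨v, hv⟩ := h
  rcases reaches_insert hv with hvv | ⟨hvx, hyv⟩
  · exact absurd hvv (hF v)
  · exact (reflTransGen_iff_eq_or_transGen.mp (hyv.trans hvx)).resolve_left hxy

end Reachability

section StronglyConnected

variable {V : Type*} {H : Set (V × V)}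

lemma sameSCC.trans {a b c : V} (hab : sameSCC H a b) (hbc : sameSCC H b c) :
    sameSCC H a c := by
  rcases hab with rfl | ⟨hab, hba⟩
  · exact hbc
  rcases hbc with rfl | ⟨hbc, hcb⟩
  · exact Or.inr ⟨hab, hba⟩
  · exact Or.inr ⟨hab.trans hbc, hcb.trans hba⟩

lemma IsSCC.mem_of_sameSCC {S : Set V} (hS : IsSCC H S) {a b : V} (ha : a ∈ S)
    (hab : sameSCC H a b) : b ∈ S := by
  obtain ⟨u, rfl⟩ := hS
  exact sameSCC.trans ha hab

lemma reaches_inter_prod_of_reaches {F : Set (V × V)} (hFH : F ⊆ H) {S : Set V} {a b : V}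
    (hS : ∀ w, sameSCC H a w → w ∈ S) (hab : reaches F a b) (hba : reaches H b a) :
    reaches (F ∩ S ×ˢ S) a b := by
  induction hab with
  | single hab =>
    exact .single ⟨hab, hS a (Or.inl rfl), hS _ (Or.inr ⟨.single (hFH hab), hba⟩)⟩
  | @tail m n ham hmn ih =>
    have hma : reaches H m a := .head (hFH hmn) hba
    exact (ih hma).tail ⟨hmn, hS m (Or.inr ⟨reaches_mono hFH ham, hma⟩),
      hS n (Or.inr ⟨reaches_mono hFH (ham.tail hmn), hba⟩)⟩

end StronglyConnected

namespace IsMaxChild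

variable {V : Type*} {E T T' : Set (V × V)}

lemma union_subset_union (hmax : IsMaxChild E T T') : E ∪ T' ⊆ E ∪ T :=
  Set.union_subset_union_right _ hmax.1

lemma reaches_of_mem_diff (hmax : IsMaxChild E T T') {x y : V} (hxy : x ≠ y)
    (he : (x, y) ∈ T \ T') : reaches (E ∪ T') y x :=
  hmax.2.1.reaches_of_hasCycle_insert hxy (hmax.2.2 _ he)

lemma mem_of_not_sameSCC (hmax : IsMaxChild E T T') {x y : V} (hxy : x ≠ y) (he : (x, y) ∈ T)
    (hsep : ¬ sameSCC (E ∪ T) x y) : (x, y) ∈ T' := by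
  by_contra hT'
  exact hsep (Or.inr ⟨.single (Or.inr he),
    reaches_mono hmax.union_subset_union (hmax.reaches_of_mem_diff hxy ⟨he, hT'⟩)⟩)

lemma inter_prod_of_isSCC (hmax : IsMaxChild E T T') (hTloop : ∀ e ∈ T, e.1 ≠ e.2)
    {S : Set V} (hS : IsSCC (E ∪ T) S) :
    IsMaxChild (E ∩ S ×ˢ S) (T ∩ S ×ˢ S) (T' ∩ S ×ˢ S) := by
  refine ⟨Set.inter_subset_inter_left _ hmax.1, hmax.2.1.mono ?_, ?_⟩
  · exact Set.union_subset_union Set.inter_subset_left Set.inter_subset_left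
  rintro ⟨x, y⟩ ⟨⟨heT, hxS, hyS⟩, he⟩
  have hT' : (x, y) ∉ T' := fun h => he ⟨h, hxS, hyS⟩
  have hyx : reaches ((E ∪ T') ∩ S ×ˢ S) y x :=
    reaches_inter_prod_of_reaches hmax.union_subset_union (fun _ => hS.mem_of_sameSCC hyS)
      (hmax.reaches_of_mem_diff (hTloop _ heT) ⟨heT, hT'⟩) (.single (Or.inr heT))
  rw [Set.union_inter_distrib_right] at hyx
  exact hasCycle_insert_of_reaches hyx

end IsMaxChild

theorem stmt_0_general {V : Type*}
    (E T T' : Set (V × V))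
    (hTloop : ∀ e ∈ T, e.1 ≠ e.2)
    (hmax : IsMaxChild E T T') :
    (∀ e ∈ T, ¬ sameSCC (E ∪ T) e.1 e.2 → e ∈ T') ∧
    (∀ S : Set V, IsSCC (E ∪ T) S →
      IsMaxChild (E ∩ S ×ˢ S) (T ∩ S ×ˢ S) (T' ∩ S ×ˢ S)) :=
  ⟨fun _ he hsep => hmax.mem_of_not_sameSCC (hTloop _ he) he hsep,
    fun _ hS => hmax.inter_prod_of_isSCC hTloop hS⟩

theorem stmt_0 {V : Type*} [Fintype V] [DecidableEq V]
    (E T T' : Set (V × V))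
    (hEloop : ∀ e ∈ E, e.1 ≠ e.2) (hTloop : ∀ e ∈ T, e.1 ≠ e.2)
    (hdisj : Disjoint E T) (hacyc : Acyclic E)
    (hmax : IsMaxChild E T T') :
    (∀ e ∈ T, ¬ sameSCC (E ∪ T) e.1 e.2 → e ∈ T') ∧
    (∀ S : Set V, IsSCC (E ∪ T) S →
      IsMaxChild (E ∩ S ×ˢ S) (T ∩ S ×ˢ S) (T' ∩ S ×ˢ S)) :=
  stmt_0_general E T T' hTloop hmax
end

section
/- Let G=(V,E) be a finite acyclic digraph, let T be a set of additional directed edges on V disjoint from E, and let H=(V, E∪T). Suppose T'⊆T satisfies: (i) T' contains every edge of T whose two endpoints lie in distinct strongly connected components of H, and (ii) for every strongly connected component S of H, the restriction (S, (E∪T') ∩ (S×S)) is a maximal child of the pair consisting of (S, E ∩ (S×S)) and T ∩ (S×S). Then C=(V, E∪T') is a maximal child of (G,T). -/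
/-!
Every cycle of `E ∪ T'` is also a cycle of `H = E ∪ T`, so all its vertices lie in one strongly
connected component of `H`; acyclicity of `E ∪ T'` therefore reduces to acyclicity inside each
component. An edge of `T \ T'` joins two vertices of one component by (i), and by (ii) adding it
already closes a cycle inside that component.
-/

section

variable {V : Type*}

theorem reaches.mono {F H : Set (V × V)} (hFH : F ⊆ H) {u v : V} (h : reaches F u v) :
    reaches H u v :=
  Relation.TransGen.mono (fun _ _ hab => hFH hab) u v h

theorem HasCycle.mono {F H : Set (V × V)} (hFH : F ⊆ H) (h : HasCycle F) : HasCycle H :=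
  let ⟨v, hv⟩ := h
  ⟨v, hv.mono hFH⟩

theorem reaches_inter_sameSCC {F H : Set (V × V)} (hFH : F ⊆ H) {v w : V}
    (hvw : reaches F v w) (hwv : reaches H w v) :
    reaches (F ∩ {x | sameSCC H v x} ×ˢ {x | sameSCC H v x}) v w := by
  induction hvw with
  | single hvw => exact .single ⟨hvw, Or.inl rfl, Or.inr ⟨.single (hFH hvw), hwv⟩⟩
  | @tail b w hvb hbw ih =>
    have hbv : reaches H b v := .head (hFH hbw) hwv
    have hvb' : reaches H v b := reaches.mono hFH hvb
    exact (ih hbv).tail ⟨hbw, Or.inr ⟨hvb', hbv⟩, Or.inr ⟨hvb'.tail (hFH hbw), hwv⟩⟩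

theorem acyclic_of_acyclic_inter_isSCC {F H : Set (V × V)} (hFH : F ⊆ H)
    (h : ∀ S, IsSCC H S → Acyclic (F ∩ S ×ˢ S)) : Acyclic F :=
  fun v hv => h _ ⟨v, rfl⟩ v (reaches_inter_sameSCC hFH hv (reaches.mono hFH hv))

end

theorem stmt_1_general {V : Type*}
    (E T T' : Set (V × V))
    (hsub : T' ⊆ T)
    (hbridge : ∀ e ∈ T, ¬ sameSCC (E ∪ T) e.1 e.2 → e ∈ T')
    (hSCC : ∀ S : Set V, IsSCC (E ∪ T) S →
      IsMaxChild (E ∩ S ×ˢ S) (T ∩ S ×ˢ S) (T' ∩ S ×ˢ S)) :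
    IsMaxChild E T T' := by
  refine ⟨hsub, ?_, ?_⟩
  · refine acyclic_of_acyclic_inter_isSCC (Set.union_subset_union_right E hsub) fun S hS => ?_
    rw [Set.union_inter_distrib_right]
    exact (hSCC S hS).2.1
  · rintro e ⟨heT, heT'⟩
    have hsame : sameSCC (E ∪ T) e.1 e.2 := by
      by_contra h
      exact heT' (hbridge e heT h)
    set S := {w | sameSCC (E ∪ T) e.1 w}
    have heS : e ∈ T ∩ S ×ˢ S := ⟨heT, Or.inl rfl, hsame⟩
    refine ((hSCC S ⟨e.1, rfl⟩).2.2 e ⟨heS, fun h => heT' h.1⟩).mono ?_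
    rw [← Set.union_inter_distrib_right]
    exact Set.insert_subset_insert Set.inter_subset_left

theorem stmt_1 {V : Type*} [Fintype V] [DecidableEq V]
    (E T T' : Set (V × V))
    (hEloop : ∀ e ∈ E, e.1 ≠ e.2) (hTloop : ∀ e ∈ T, e.1 ≠ e.2)
    (hdisj : Disjoint E T) (hacyc : Acyclic E)
    (hsub : T' ⊆ T)
    (hbridge : ∀ e ∈ T, ¬ sameSCC (E ∪ T) e.1 e.2 → e ∈ T')
    (hSCC : ∀ S : Set V, IsSCC (E ∪ T) S →
      IsMaxChild (E ∩ S ×ˢ S) (T ∩ S ×ˢ S) (T' ∩ S ×ˢ S)) :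
    IsMaxChild E T T' :=
  stmt_1_general E T T' hsub hbridge hSCC
end

section
/- Let G=(V,E) be a finite acyclic digraph and let T ⊆ V×V be a set of additional edges disjoint from E such that for every pair of distinct vertices u,v ∈ V, at least one of (u,v) or (v,u) belongs to E∪T. Then for every maximal child C of (G,T), the reachability relation of C (u is related to v iff there is a nonempty directed path from u to v in C) is a strict total order on V. Consequently C has a unique topological ordering. -/
/-- `l` is a topological ordering of the digraph with edge set `E`: it lists every
vertex exactly once, and the tail of every edge appears before its head. -/
def IsTopOrder {V : Type*} [DecidableEq V] (E : Set (V × V)) (l : List V) : Prop :=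
  l.Nodup ∧ (∀ v : V, v ∈ l) ∧ ∀ e ∈ E, l.idxOf e.1 < l.idxOf e.2

/-!
Reachability in an acyclic digraph is always a strict order; the point is totality. If an edge
`(u, v)` of `T` was left out of a maximal child `C`, adding it closes a cycle, and that cycle must use
the new edge, so `v` already reaches `u` in `C`. Hence the endpoints of every edge of `E ∪ T` are
comparable in `C`, and by the hypothesis on `E ∪ T` so is every pair of distinct vertices. A
topological order of `C` must then list the vertices increasingly for this total order, which
determines it.
-/

lemma List.Pairwise.idxOf_lt_of_rel {α : Type*} [DecidableEq α] {r : α → α → Prop} [Std.Asymm r]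
    {l : List α} (hl : l.Pairwise r) {x y : α} (hx : x ∈ l) (hy : y ∈ l) (hxy : r x y) :
    l.idxOf x < l.idxOf y := by
  by_contra! hle
  rcases hle.lt_or_eq with hlt | heq
  · have hyx := List.pairwise_iff_getElem.1 hl _ _ (List.idxOf_lt_length_iff.2 hy)
      (List.idxOf_lt_length_iff.2 hx) hlt
    rw [List.getElem_idxOf, List.getElem_idxOf] at hyx
    exact Std.Asymm.asymm _ _ hxy hyx
  · rw [List.idxOf_inj hy] at heq
    exact Std.Asymm.asymm _ _ hxy (heq ▸ hxy)

section Reachability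

variable {V : Type*} {C : Set (V × V)} {u v : V}

lemma reaches_or_of_reaches_insert {a b : V} (h : reaches (insert (u, v) C) a b) :
    reaches C a b ∨ (Relation.ReflTransGen (fun x y => (x, y) ∈ C) a u ∧
      Relation.ReflTransGen (fun x y => (x, y) ∈ C) v b) := by
  induction h with
  | single h =>
    rcases Set.mem_insert_iff.1 h with h | h
    · obtain ⟨rfl, rfl⟩ := Prod.mk.inj h
      exact Or.inr ⟨.refl, .refl⟩
    · exact Or.inl (.single h)
  | tail _ hbc ih =>
    rcases Set.mem_insert_iff.1 hbc with h | h
    · obtain ⟨rfl, rfl⟩ := Prod.mk.inj h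
      rcases ih with ih | ⟨ih, _⟩
      · exact Or.inr ⟨ih.to_reflTransGen, .refl⟩
      · exact Or.inr ⟨ih, .refl⟩
    · rcases ih with ih | ⟨ih₁, ih₂⟩
      · exact Or.inl (ih.tail h)
      · exact Or.inr ⟨ih₁, ih₂.tail h⟩

lemma Acyclic.reflTransGen_of_hasCycle_insert (hC : Acyclic C)
    (h : HasCycle (insert (u, v) C)) : Relation.ReflTransGen (fun x y => (x, y) ∈ C) v u := by
  obtain ⟨w, hw⟩ := h
  rcases reaches_or_of_reaches_insert hw with hw | ⟨hwu, hvw⟩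
  · exact absurd hw (hC w)
  · exact hvw.trans hwu

end Reachability

section MaxChild

variable {V : Type*} {E T T' : Set (V × V)}

lemma IsMaxChild.reaches_or_reaches (hmax : IsMaxChild E T T') {x y : V} (hxy : x ≠ y)
    (h : (x, y) ∈ E ∪ T) : reaches (E ∪ T') x y ∨ reaches (E ∪ T') y x := by
  by_cases hC : (x, y) ∈ E ∪ T'
  · exact Or.inl (.single hC)
  have hT : (x, y) ∈ T \ T' := ⟨h.resolve_left fun hE => hC (Or.inl hE), fun h' => hC (Or.inr h')⟩
  have hyx := hmax.2.1.reflTransGen_of_hasCycle_insert (hmax.2.2 _ hT)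
  exact Or.inr ((Relation.reflTransGen_iff_eq_or_transGen.1 hyx).resolve_left hxy)

lemma IsMaxChild.isStrictTotalOrder (hmax : IsMaxChild E T T')
    (htot : ∀ u v : V, u ≠ v → (u, v) ∈ E ∪ T ∨ (v, u) ∈ E ∪ T) :
    IsStrictTotalOrder V (reaches (E ∪ T')) where
  trichotomous a b hab hba := by
    by_contra hne
    rcases htot a b hne with h | h
    · exact (hmax.reaches_or_reaches hne h).elim hab hba
    · exact (hmax.reaches_or_reaches (Ne.symm hne) h).elim hba hab
  irrefl := hmax.2.1
  trans _ _ _ := Relation.TransGen.trans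

end MaxChild

section TopOrder

variable {V : Type*} [DecidableEq V] {E : Set (V × V)} {l : List V}

lemma IsTopOrder.idxOf_lt_of_reaches (hl : IsTopOrder E l) {x y : V} (h : reaches E x y) :
    l.idxOf x < l.idxOf y := by
  induction h with
  | single h => exact hl.2.2 _ h
  | tail _ h ih => exact ih.trans (hl.2.2 _ h)

lemma IsTopOrder.pairwise_reaches [Std.Trichotomous (reaches E)] (hl : IsTopOrder E l) :
    l.Pairwise (reaches E) := by
  refine List.pairwise_iff_getElem.2 fun i j hi hj hij => ?_
  rcases trichotomous (r := reaches E) l[i] l[j] with h | h | h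
  · exact h
  · exact absurd (hl.1.getElem_inj_iff.1 h) hij.ne
  · have hji := hl.idxOf_lt_of_reaches h
    rw [hl.1.idxOf_getElem, hl.1.idxOf_getElem] at hji
    omega

theorem existsUnique_isTopOrder [Fintype V] [IsStrictTotalOrder V (reaches E)] :
    ∃! l : List V, IsTopOrder E l := by
  classical
  let : LinearOrder V := linearOrderOfSTO (reaches E)
  set l₀ := (Finset.univ : Finset V).sort (· ≤ ·)
  have hmem : ∀ v : V, v ∈ l₀ := fun v => (Finset.mem_sort _).2 (Finset.mem_univ v)
  have htop : IsTopOrder E l₀ := ⟨Finset.sort_nodup _ _, hmem, fun e he =>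
    (Finset.sortedLT_sort _).pairwise.idxOf_lt_of_rel (hmem _) (hmem _) (.single he)⟩
  refine ⟨l₀, htop, fun l hl => ?_⟩
  have hperm : l.Perm l₀ := (List.perm_ext_iff_of_nodup hl.1 htop.1).2
    fun a => ⟨fun _ => hmem a, fun _ => hl.2.1 a⟩
  exact hperm.eq_of_pairwise' hl.pairwise_reaches htop.pairwise_reaches

end TopOrder

theorem stmt_7_general {V : Type*} [Fintype V] [DecidableEq V]
    (E T : Set (V × V))
    (htot : ∀ u v : V, u ≠ v → (u, v) ∈ E ∪ T ∨ (v, u) ∈ E ∪ T)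
    (T' : Set (V × V)) (hmax : IsMaxChild E T T') :
    IsStrictTotalOrder V (reaches (E ∪ T')) ∧
    ∃! l : List V, IsTopOrder (E ∪ T') l :=
  have := hmax.isStrictTotalOrder htot
  ⟨this, existsUnique_isTopOrder⟩

theorem stmt_7 {V : Type*} [Fintype V] [DecidableEq V]
    (E T : Set (V × V))
    (hEloop : ∀ e ∈ E, e.1 ≠ e.2) (hTloop : ∀ e ∈ T, e.1 ≠ e.2)
    (hdisj : Disjoint E T) (hacyc : Acyclic E)
    (htot : ∀ u v : V, u ≠ v → (u, v) ∈ E ∪ T ∨ (v, u) ∈ E ∪ T)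
    (T' : Set (V × V)) (hmax : IsMaxChild E T T') :
    IsStrictTotalOrder V (reaches (E ∪ T')) ∧
    ∃! l : List V, IsTopOrder (E ∪ T') l :=
  stmt_7_general E T htot T' hmax
end

section
/- (McGarvey–Debord realizability of weighted majority graphs.) Let A be a finite set of alternatives and let w : A×A → ℤ be a function satisfying w(a,b) = −w(b,a) for all a,b ∈ A, such that all the values w(a,b) for distinct a,b have the same parity. Then there exists a profile P, i.e., a finite list of strict total orders on A, such that for every pair of distinct alternatives a,b, w(a,b) = |{votes in P ranking a above b}| − |{votes in P ranking b above a}|. -/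
/-!
McGarvey's construction. Fix any strict total order `r` on `A`. The ballot "`a`, then `b`, then
the rest ordered by `r`" together with the reverse of "`b`, then `a`, then the rest by `r`" has
margin `2` on `(a, b)`, `-2` on `(b, a)` and `0` on every other pair. Margins of profiles add
under concatenation, so summing such pairs realizes every antisymmetric function with even
values. If the values are odd, first subtract the margin of one ballot, which is `±1` on every
pair of distinct alternatives.
-/

open Classical in
/-- The weighted majority margin of the profile `P`:
(number of votes ranking `a` above `b`) − (number of votes ranking `b` above `a`). -/
noncomputable def margin {A : Type*} (P : List (A → A → Prop)) (a b : A) : ℤ :=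
  (P.countP (fun v => decide (v a b)) : ℤ) - (P.countP (fun v => decide (v b a)) : ℤ)

namespace margin

variable {A : Type*}

@[simp]
theorem nil (a b : A) : margin [] a b = 0 := by
  simp [margin]

theorem append (P Q : List (A → A → Prop)) (a b : A) :
    margin (P ++ Q) a b = margin P a b + margin Q a b := by
  simp only [margin, List.countP_append]
  push_cast
  ring

theorem swap (P : List (A → A → Prop)) (a b : A) : margin P b a = -margin P a b := by
  simp only [margin]
  ring

@[simp]
theorem self (P : List (A → A → Prop)) (a : A) : margin P a a = 0 := by
  simp [margin]

open Classical in
theorem singleton (v : A → A → Prop) (a b : A) :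
    margin [v] a b = (if v a b then 1 else 0) - (if v b a then 1 else 0) := by
  simp only [margin, List.countP_singleton, decide_eq_true_eq]
  split_ifs <;> rfl

theorem singleton_swap (v : A → A → Prop) (a b : A) :
    margin [Function.swap v] a b = -margin [v] a b := by
  simp only [singleton, Function.swap]
  ring

theorem odd_singleton (v : A → A → Prop) [IsStrictTotalOrder A v] {a b : A} (hab : a ≠ b) :
    Odd (margin [v] a b) := by
  rw [singleton]
  rcases trichotomous_of v a b with h | rfl | h
  · simp [h, asymm h]
  · exact absurd rfl hab
  · simp [h, asymm h]

theorem singleton_congr {v u : A → A → Prop} {x y : A} (hxy : v x y ↔ u x y)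
    (hyx : v y x ↔ u y x) : margin [v] x y = margin [u] x y := by
  classical
  simp only [margin.singleton, hxy, hyx]

end margin

section McGarvey

variable {A : Type*}

def promote (a : A) (r : A → A → Prop) (x y : A) : Prop :=
  y ≠ a ∧ (x = a ∨ r x y)

instance (a : A) (r : A → A → Prop) [IsStrictTotalOrder A r] :
    IsStrictTotalOrder A (promote a r) where
  irrefl x := by
    rintro ⟨hx, hxa | hxx⟩
    exacts [hx hxa, irrefl x hxx]
  trans _ _ _ := fun ⟨_, hxy⟩ ⟨hz, hyz⟩ =>
    ⟨hz, hxy.imp_right (_root_.trans · (hyz.resolve_left ‹_›))⟩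
  trichotomous x y hxy hyx := by
    by_cases hx : x = a
    · by_contra hne
      exact hxy ⟨fun hy => hne (hx.trans hy.symm), .inl hx⟩
    by_cases hy : y = a
    · exact absurd ⟨hx, .inl hy⟩ hyx
    exact Std.Trichotomous.trichotomous (r := r) x y (fun h => hxy ⟨hy, .inr h⟩)
      (fun h => hyx ⟨hx, .inr h⟩)

theorem promote_promote_iff {a b x y : A} {r : A → A → Prop}
    (hab : ¬(x = a ∧ y = b)) (hba : ¬(x = b ∧ y = a)) :
    promote a (promote b r) x y ↔ promote b (promote a r) x y := by
  simp only [promote]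
  grind

def mcgarveyPair (a b : A) (r : A → A → Prop) : List (A → A → Prop) :=
  [promote a (promote b r), Function.swap (promote b (promote a r))]

theorem margin_mcgarveyPair [DecidableEq A] (a b : A) (r : A → A → Prop) (x y : A) :
    margin (mcgarveyPair a b r) x y =
      2 * ((if (x, y) = (a, b) then 1 else 0) - (if (y, x) = (a, b) then 1 else 0)) := by
  have hpair : margin (mcgarveyPair a b r) x y =
      margin [promote a (promote b r)] x y - margin [promote b (promote a r)] x y := by
    rw [mcgarveyPair, ← List.singleton_append, margin.append,
      margin.singleton_swap (promote b (promote a r)), sub_eq_add_neg]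
  rw [hpair]
  by_cases hab : a = b
  · subst hab
    simp [and_comm]
  by_cases hxy : (x, y) = (a, b) ∨ (y, x) = (a, b)
  · rcases hxy with h | h <;> simp only [Prod.mk.injEq] at h <;> obtain ⟨rfl, rfl⟩ := h <;>
      simp [margin.singleton, promote, hab, Ne.symm hab]
  · simp only [Prod.mk.injEq, not_or] at hxy
    rw [margin.singleton_congr (promote_promote_iff (by grind) (by grind))
      (promote_promote_iff (by grind) (by grind))]
    simp [hxy]

variable (A) in
def realizableMargins : AddSubmonoid (A → A → ℤ) where
  carrier :=
    {m | ∃ P : List (A → A → Prop), (∀ v ∈ P, IsStrictTotalOrder A v) ∧ margin P = m}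
  zero_mem' := ⟨[], by simp, by funext a b; simp⟩
  add_mem' := by
    rintro _ _ ⟨P, hP, rfl⟩ ⟨Q, hQ, rfl⟩
    refine ⟨P ++ Q, fun v hv => ?_, by funext a b; exact margin.append P Q a b⟩
    rcases List.mem_append.mp hv with hv | hv
    exacts [hP v hv, hQ v hv]

theorem margin_singleton_mem_realizableMargins (v : A → A → Prop) [IsStrictTotalOrder A v] :
    margin [v] ∈ realizableMargins A :=
  ⟨[v], by simpa, rfl⟩

theorem margin_mcgarveyPair_mem_realizableMargins (a b : A) (r : A → A → Prop)
    [IsStrictTotalOrder A r] : margin (mcgarveyPair a b r) ∈ realizableMargins A :=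
  ⟨mcgarveyPair a b r, by
    simp only [mcgarveyPair, List.mem_cons, List.not_mem_nil, or_false]
    rintro v (rfl | rfl) <;> infer_instance, rfl⟩

theorem two_nsmul_mem_realizableMargins [Fintype A] (u : A → A → ℤ)
    (hu : ∀ a b, u a b = -u b a) : 2 • u ∈ realizableMargins A := by
  classical
  have hsum : 2 • u =
      ∑ p : A × A, (u p.1 p.2).toNat • margin (mcgarveyPair p.1 p.2 WellOrderingRel) := by
    funext x y
    simp only [Pi.smul_apply, Finset.sum_apply, margin_mcgarveyPair, Prod.mk.eta]
    simp only [nsmul_eq_mul, mul_sub, mul_ite, mul_one, mul_zero, Finset.sum_sub_distrib,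
      Finset.sum_ite_eq, Finset.mem_univ, if_true]
    rw [hu y x, ← sub_mul, Int.toNat_sub_toNat_neg, Nat.cast_ofNat, mul_comm]
  rw [hsum]
  exact sum_mem fun p _ => nsmul_mem (margin_mcgarveyPair_mem_realizableMargins _ _ _) _

theorem mem_realizableMargins_of_even [Fintype A] {m : A → A → ℤ}
    (hanti : ∀ a b, m a b = -m b a) (heven : ∀ a b, Even (m a b)) :
    m ∈ realizableMargins A := by
  choose u hu using heven
  have hm : m = 2 • u := funext₂ fun a b => by simp [hu, two_mul]
  exact hm ▸ two_nsmul_mem_realizableMargins u fun a b => by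
    linarith [hu a b, hu b a, hanti a b]

end McGarvey

theorem stmt_13_general {A : Type*} [Fintype A]
    (w : A → A → ℤ)
    (hanti : ∀ a b : A, w a b = -w b a)
    (hparity : ∀ a b c d : A, a ≠ b → c ≠ d → w a b % 2 = w c d % 2) :
    ∃ P : List (A → A → Prop), (∀ v ∈ P, IsStrictTotalOrder A v) ∧
      ∀ a b : A, a ≠ b → w a b = margin P a b := by
  suffices w ∈ realizableMargins A by
    obtain ⟨P, hP, hw⟩ := this
    exact ⟨P, hP, fun a b _ => by rw [hw]⟩
  have hself (a : A) : w a a = 0 := by linarith [hanti a a]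
  by_cases hodd : ∃ a b, a ≠ b ∧ Odd (w a b)
  · obtain ⟨a₀, b₀, hab₀, hw₀⟩ := hodd
    rw [← sub_add_cancel w (margin [WellOrderingRel])]
    refine add_mem (mem_realizableMargins_of_even (fun a b => ?_) (fun a b => ?_))
      (margin_singleton_mem_realizableMargins _)
    · simp only [Pi.sub_apply, hanti a b, margin.swap [WellOrderingRel] a b]
      ring
    · rcases eq_or_ne a b with rfl | hab
      · simp [hself]
      have hmargin := margin.odd_singleton WellOrderingRel hab
      have hpar := hparity a b a₀ b₀ hab hab₀
      rw [Int.odd_iff] at hw₀ hmargin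
      rw [Pi.sub_apply, Pi.sub_apply, Int.even_iff]
      omega
  · simp only [not_exists, not_and, Int.not_odd_iff_even] at hodd
    refine mem_realizableMargins_of_even hanti fun a b => ?_
    rcases eq_or_ne a b with rfl | hab
    · simp [hself]
    exact hodd a b hab

/-- McGarvey–Debord realizability of weighted majority graphs. -/
theorem stmt_13 {A : Type*} [Fintype A] [DecidableEq A]
    (w : A → A → ℤ)
    (hanti : ∀ a b : A, w a b = -w b a)
    (hparity : ∀ a b c d : A, a ≠ b → c ≠ d → w a b % 2 = w c d % 2) :
    ∃ P : List (A → A → Prop), (∀ v ∈ P, IsStrictTotalOrder A v) ∧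
      ∀ a b : A, a ≠ b → w a b = margin P a b :=
  stmt_13_general w hanti hparity
end
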